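/- mu(33) = 3, and for every integer t >= 2 one has mu(2^(t+5) + 2^(t+2) + 2^(t+1) - 5) = 5. -/
import Mathlib


open MvPolynomial

noncomputable section

/-- The polynomial algebra `P₅ = F₂[u₁,…,u₅]`, with `uᵢ = X (i-1)`. -/
abbrev P5 : Type := MvPolynomial (Fin 5) (ZMod 2)

/-- The total Steenrod square: the `F₂`-algebra map with `Sq(uᵢ) = uᵢ + uᵢ²`. -/
def SqT : P5 →ₐ[ZMod 2] P5 := aeval fun i => X i + X i ^ 2

/-- The subspace `(A⁺P₅)_d` of hit polynomials in degree `d`: the span of the polynomials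
`Sq^j(g)` for `j > 0` and `g` homogeneous of degree `d - j`, where `Sq^j(g)` is the
homogeneous component of degree `(d - j) + j` of `Sq(g)`. -/
def hitSubmodule (d : ℕ) : Submodule (ZMod 2) P5 :=
  Submodule.span (ZMod 2)
    { f | ∃ j : ℕ, 0 < j ∧ ∃ g : P5, g.IsHomogeneous (d - j) ∧
        f = homogeneousComponent (d - j + j) (SqT g) }

/-- The homogeneous component `(P₅)_d`. -/
abbrev Hd (d : ℕ) : Submodule (ZMod 2) P5 := homogeneousSubmodule (Fin 5) (ZMod 2) d

/-- The hit elements of degree `d`, as a subspace of `(P₅)_d`. -/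
def hitIn (d : ℕ) : Submodule (ZMod 2) (Hd d) := (hitSubmodule d).comap (Hd d).subtype

/-- The cohit space `(QP₅)_d = (P₅)_d / (A⁺P₅)_d`. -/
abbrev QP (d : ℕ) := Hd d ⧸ hitIn d

/-- `wseq m i` is the `(i+1)`-st entry `ω_{i+1}(u)` of the weight vector of the monomial `u`
with exponent vector `m`. -/
def wseq (m : Fin 5 →₀ ℕ) : ℕ → ℕ := fun i => ∑ j : Fin 5, m j / 2 ^ i % 2

/-- A finite list `(ω₁, ω₂, …)` viewed as a weight sequence. -/
def toSeq (l : List ℕ) : ℕ → ℕ := fun i => l.getD i 0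

/-- Left-lexicographic strict order on weight sequences. -/
def seqLt (a b : ℕ → ℕ) : Prop := ∃ i, a i < b i ∧ ∀ j, j < i → a j = b j

def seqLe (a b : ℕ → ℕ) : Prop := a = b ∨ seqLt a b

/-- Total degree of a monomial exponent vector. -/
def degOf (m : Fin 5 →₀ ℕ) : ℕ := ∑ j, m j

/-- `(P₅)_d(ω)`: the span of the degree-`d` monomials of weight vector `≤ ω`. -/
def PdW (d : ℕ) (w : List ℕ) : Submodule (ZMod 2) P5 :=
  Submodule.span (ZMod 2)
    { f | ∃ m : Fin 5 →₀ ℕ, degOf m = d ∧ seqLe (wseq m) (toSeq w) ∧ f = monomial m 1 }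

/-- `(P₅)_d(<ω)`: the span of the degree-`d` monomials of weight vector `< ω`. -/
def PdWlt (d : ℕ) (w : List ℕ) : Submodule (ZMod 2) P5 :=
  Submodule.span (ZMod 2)
    { f | ∃ m : Fin 5 →₀ ℕ, degOf m = d ∧ seqLt (wseq m) (toSeq w) ∧ f = monomial m 1 }

/-- The subspace `((A⁺P₅)_d ∩ (P₅)_d(ω)) + (P₅)_d(<ω)` of `(P₅)_d(ω)`. -/
def QPWden (d : ℕ) (w : List ℕ) : Submodule (ZMod 2) (PdW d w) :=
  ((hitSubmodule d ⊓ PdW d w) ⊔ PdWlt d w).comap (PdW d w).subtype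

/-- `(QP₅)_d(ω)`. -/
abbrev QPW (d : ℕ) (w : List ℕ) := PdW d w ⧸ QPWden d w

/-- `(P₅)⁰`: span of the monomials in which some variable does not occur. -/
def Pzero : Submodule (ZMod 2) P5 :=
  Submodule.span (ZMod 2)
    { f | ∃ m : Fin 5 →₀ ℕ, (∃ j, m j = 0) ∧ f = monomial m 1 }

/-- `(P₅)^{>0}`: span of the monomials in which all five variables occur. -/
def Ppos : Submodule (ZMod 2) P5 :=
  Submodule.span (ZMod 2)
    { f | ∃ m : Fin 5 →₀ ℕ, (∀ j, 0 < m j) ∧ f = monomial m 1 }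

/-- The image of `A ∩ (P₅)_d` in `(QP₅)_d`. -/
def imageInQP (d : ℕ) (A : Submodule (ZMod 2) P5) : Submodule (ZMod 2) (QP d) :=
  Submodule.map (hitIn d).mkQ (A.comap (Hd d).subtype)

/-- The image of `A ∩ (P₅)_d(ω)` in `(QP₅)_d(ω)`. -/
def imageInQPW (d : ℕ) (w : List ℕ) (A : Submodule (ZMod 2) P5) :
    Submodule (ZMod 2) (QPW d w) :=
  Submodule.map (QPWden d w).mkQ (A.comap (PdW d w).subtype)

/-- Linear substitution action of a matrix: `u_j ↦ ∑ i, M i j • u_i`. -/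
def matAct (M : Matrix (Fin 5) (Fin 5) (ZMod 2)) : P5 →ₐ[ZMod 2] P5 :=
  aeval fun j => ∑ i, M i j • X i

/-- The `GL₅(F₂)`-invariant classes in `(QP₅)_d`. -/
def QPinvGL (d : ℕ) : Set (QP d) :=
  { q | ∃ f : Hd d, Submodule.Quotient.mk f = q ∧
      ∀ g : Matrix.GeneralLinearGroup (Fin 5) (ZMod 2),
        matAct (↑g) (f : P5) - (f : P5) ∈ hitSubmodule d }

/-- The `GL₅(F₂)`-invariant classes in `(QP₅)_d(ω)`. -/
def QPWinvGL (d : ℕ) (w : List ℕ) : Set (QPW d w) :=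
  { q | ∃ f : PdW d w, Submodule.Quotient.mk f = q ∧
      ∀ g : Matrix.GeneralLinearGroup (Fin 5) (ZMod 2),
        matAct (↑g) (f : P5) - (f : P5) ∈ hitSubmodule d ⊔ PdWlt d w }

/-- The `Σ₅`-invariant classes in `(QP₅)_d(ω)`, where `Σ₅` acts by permuting the variables. -/
def QPWinvSigma (d : ℕ) (w : List ℕ) : Set (QPW d w) :=
  { q | ∃ f : PdW d w, Submodule.Quotient.mk f = q ∧
      ∀ σ : Equiv.Perm (Fin 5),
        rename (⇑σ) (f : P5) - (f : P5) ∈ hitSubmodule d ⊔ PdWlt d w }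

/-- The order on monomials of a fixed degree: first by weight vector (left-lex), then by
exponent vector (lex). -/
def monLt (m m' : Fin 5 →₀ ℕ) : Prop :=
  seqLt (wseq m) (wseq m') ∨
    (wseq m = wseq m' ∧ ∃ i : Fin 5, m i < m' i ∧ ∀ j, j < i → m j = m' j)

/-- A monomial (of degree `d`) is inadmissible if it is congruent, modulo hit elements,
to a sum of strictly smaller monomials of the same degree. -/
def Inadmissible (d : ℕ) (m : Fin 5 →₀ ℕ) : Prop :=
  ∃ S : Finset (Fin 5 →₀ ℕ), (∀ v ∈ S, degOf v = d ∧ monLt v m) ∧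
    (monomial m (1 : ZMod 2) + ∑ v ∈ S, monomial v 1) ∈ hitSubmodule d

def Admissible (d : ℕ) (m : Fin 5 →₀ ℕ) : Prop :=
  degOf m = d ∧ ¬ Inadmissible d m

/-- `s = max { i ≥ 1 | ω_i(u) > 0 }` (in 1-based indexing). -/
def sMax (m : Fin 5 →₀ ℕ) : ℕ := sSup { i | 0 < wseq m i } + 1

/-- Strict inadmissibility. -/
def StrictlyInadmissible (d : ℕ) (m : Fin 5 →₀ ℕ) : Prop :=
  ∃ S : Finset (Fin 5 →₀ ℕ), (∀ v ∈ S, degOf v = d ∧ monLt v m) ∧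
    ∃ U : ℕ → P5, (∀ k, (U k).IsHomogeneous (d - 2 ^ k)) ∧
      monomial m (1 : ZMod 2) =
        (∑ v ∈ S, monomial v 1) +
          ∑ k ∈ Finset.range (sMax m), homogeneousComponent (d - 2 ^ k + 2 ^ k) (SqT (U k))

/-- The exponent vector `(a₁,…,a₅)` as a finitely supported function. -/
def mk5 (a b c d e : ℕ) : Fin 5 →₀ ℕ := Finsupp.equivFunOnFinite.symm ![a, b, c, d, e]

/-- The monomial `u₁^a u₂^b u₃^c u₄^d u₅^e`. -/
def mon5 (a b c d e : ℕ) : P5 := monomial (mk5 a b c d e) 1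

/-- The polynomial `ζ` of degree `14`. -/
def zetaP : P5 :=
  mon5 0 1 1 6 6 + mon5 1 0 1 6 6 + mon5 1 1 0 6 6 + mon5 1 1 6 0 6 + mon5 1 1 6 6 0 +
  mon5 0 3 3 4 4 + mon5 3 0 3 4 4 + mon5 3 3 0 4 4 + mon5 3 3 4 0 4 + mon5 3 3 4 4 0 +
  mon5 1 1 2 4 6 + mon5 1 1 2 6 4 + mon5 1 1 6 2 4 + mon5 1 2 1 4 6 + mon5 1 2 4 1 6 +
  mon5 1 6 1 2 4 + mon5 1 2 3 4 4 + mon5 1 3 2 4 4 + mon5 3 1 2 4 4 + mon5 3 1 4 2 4 +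
  mon5 1 2 4 3 4 + mon5 3 4 1 2 4

/-- The function `μ`. -/
def muF (d : ℕ) : ℕ := sInf { n : ℕ | 1 ≤ n ∧ (Nat.digits 2 (d + n)).sum ≤ n }


private lemma sum_digits_split {a m k : ℕ} (ha : a < 2 ^ k) :
    (Nat.digits 2 (a + 2 ^ k * m)).sum = (Nat.digits 2 a).sum + (Nat.digits 2 m).sum := by
  rcases Nat.eq_zero_or_pos m with rfl | hm
  · simp
  rcases Nat.eq_zero_or_pos a with rfl | hapos
  · simp [Nat.digits_base_pow_mul (by norm_num : (1:ℕ) < 2) hm, List.sum_append]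
  have hlen : (Nat.digits 2 a).length ≤ k := by
    rw [Nat.digits_len 2 a (by norm_num) hapos.ne']
    exact Nat.log_lt_of_lt_pow hapos.ne' ha
  have h := Nat.digits_append_zeroes_append_digits
    (b := 2) (k := k - (Nat.digits 2 a).length) (m := m) (n := a) (by norm_num) hm
  rw [Nat.add_sub_cancel' hlen] at h
  rw [← h]
  simp [List.sum_append]

private lemma sum_digits_pow_sub_one : ∀ n : ℕ, (Nat.digits 2 (2 ^ n - 1)).sum = n := by
  intro n
  induction n with
  | zero => simp
  | succ n ih =>
    have h1 : 1 ≤ 2 ^ n := Nat.one_le_two_pow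
    have h : 2 ^ (n + 1) - 1 = 2 * (2 ^ n - 1) + 1 := by
      have : 2 ^ (n + 1) = 2 * 2 ^ n := by ring
      omega
    rw [h, Nat.digits_def' (by norm_num : (1:ℕ) < 2) (by omega)]
    simp only [Nat.mul_add_mod, Nat.mul_add_div (by norm_num : 0 < 2)]
    simp only [List.sum_cons]
    norm_num
    omega

private lemma sd4 (n : ℕ) : (Nat.digits 2 (2 ^ (n + 3) - 4)).sum = n + 1 := by
  have e : 2 ^ (n + 3) = 2 ^ (n + 1) * 4 := by ring
  have e2 : (2:ℕ) ^ 2 = 4 := by norm_num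
  have h1 : 1 ≤ 2 ^ (n + 1) := Nat.one_le_two_pow
  have he : 2 ^ (n + 3) - 4 = 0 + 2 ^ 2 * (2 ^ (n + 1) - 1) := by omega
  rw [he, sum_digits_split (by omega : (0:ℕ) < 2 ^ 2), sum_digits_pow_sub_one]
  simp

private lemma sd3 (n : ℕ) : (Nat.digits 2 (2 ^ (n + 3) - 3)).sum = n + 2 := by
  have e : 2 ^ (n + 3) = 2 ^ (n + 1) * 4 := by ring
  have e2 : (2:ℕ) ^ 2 = 4 := by norm_num
  have h1 : 1 ≤ 2 ^ (n + 1) := Nat.one_le_two_pow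
  have he : 2 ^ (n + 3) - 3 = 1 + 2 ^ 2 * (2 ^ (n + 1) - 1) := by omega
  rw [he, sum_digits_split (by omega : (1:ℕ) < 2 ^ 2), sum_digits_pow_sub_one]
  norm_num
  omega

private lemma sd2 (n : ℕ) : (Nat.digits 2 (2 ^ (n + 3) - 2)).sum = n + 2 := by
  have e : 2 ^ (n + 3) = 2 ^ (n + 2) * 2 := by ring
  have e2 : (2:ℕ) ^ 1 = 2 := by norm_num
  have h1 : 1 ≤ 2 ^ (n + 2) := Nat.one_le_two_pow
  have he : 2 ^ (n + 3) - 2 = 0 + 2 ^ 1 * (2 ^ (n + 2) - 1) := by omega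
  rw [he, sum_digits_split (by omega : (0:ℕ) < 2 ^ 1), sum_digits_pow_sub_one]
  simp


/-- `μ(33) = 3`, and `μ(2^(t+5) + 2^(t+2) + 2^(t+1) - 5) = 5` for all `t ≥ 2`. -/
theorem mu_values :
    muF 33 = 3 ∧
    ∀ t : ℕ, 2 ≤ t → muF (2 ^ (t + 5) + 2 ^ (t + 2) + 2 ^ (t + 1) - 5) = 5 := by
  unfold muF
  constructor
  · have h3 : 3 ∈ { n : ℕ | 1 ≤ n ∧ (Nat.digits 2 (33 + n)).sum ≤ n } := by
      constructor
      · norm_num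
      · norm_num
    refine le_antisymm (Nat.sInf_le h3) (le_csInf ⟨3, h3⟩ ?_)
    rintro b ⟨hb1, hb2⟩
    by_contra hlt
    push_neg at hlt
    interval_cases b <;> norm_num at hb2
  · intro t ht
    obtain ⟨s, rfl⟩ : ∃ s, t = s + 2 := ⟨t - 2, by omega⟩
    have e16 : 2 ^ (s + 2 + 5) = 2 ^ (s + 3) * 16 := by ring
    have e2 : 2 ^ (s + 2 + 2) = 2 ^ (s + 3) * 2 := by ring
    have e1 : 2 ^ (s + 2 + 1) = 2 ^ (s + 3) := by ring
    have h8 : (8:ℕ) ≤ 2 ^ (s + 3) := by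
      calc (8:ℕ) = 2 ^ 3 := by norm_num
        _ ≤ 2 ^ (s + 3) := Nat.pow_le_pow_right (by norm_num) (by omega)
    have h5 : 5 ∈ { n : ℕ | 1 ≤ n ∧
        (Nat.digits 2 (2 ^ (s + 2 + 5) + 2 ^ (s + 2 + 2) + 2 ^ (s + 2 + 1) - 5 + n)).sum ≤ n } := by
      refine ⟨by norm_num, ?_⟩
      have he : 2 ^ (s + 2 + 5) + 2 ^ (s + 2 + 2) + 2 ^ (s + 2 + 1) - 5 + 5
          = 0 + 2 ^ (s + 3) * 19 := by omega
      rw [he, sum_digits_split (by omega : (0:ℕ) < 2 ^ (s + 3))]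
      norm_num
    refine le_antisymm (Nat.sInf_le h5) (le_csInf ⟨5, h5⟩ ?_)
    rintro b ⟨hb1, hb2⟩
    by_contra hlt
    push_neg at hlt
    have h18 : (Nat.digits 2 18).sum = 2 := by norm_num
    interval_cases b
    · have he : 2 ^ (s + 2 + 5) + 2 ^ (s + 2 + 2) + 2 ^ (s + 2 + 1) - 5 + 1
          = (2 ^ (s + 3) - 4) + 2 ^ (s + 3) * 18 := by omega
      rw [he, sum_digits_split (by omega), sd4] at hb2
      omega
    · have he : 2 ^ (s + 2 + 5) + 2 ^ (s + 2 + 2) + 2 ^ (s + 2 + 1) - 5 + 2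
          = (2 ^ (s + 3) - 3) + 2 ^ (s + 3) * 18 := by omega
      rw [he, sum_digits_split (by omega), sd3] at hb2
      omega
    · have he : 2 ^ (s + 2 + 5) + 2 ^ (s + 2 + 2) + 2 ^ (s + 2 + 1) - 5 + 3
          = (2 ^ (s + 3) - 2) + 2 ^ (s + 3) * 18 := by omega
      rw [he, sum_digits_split (by omega), sd2] at hb2
      omega
    · have he : 2 ^ (s + 2 + 5) + 2 ^ (s + 2 + 2) + 2 ^ (s + 2 + 1) - 5 + 4
          = (2 ^ (s + 3) - 1) + 2 ^ (s + 3) * 18 := by omega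
      rw [he, sum_digits_split (by omega), sum_digits_pow_sub_one] at hb2
      omega


end
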